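/- If S = [i,j] is a minimal full segment (containing no other full segment), then the subsequence l_i, ..., l_j is constant. -/
import Mathlib


/-- Minimum of the values `l i, ..., l j` (real-valued sequence). -/
noncomputable def segMin (l : ℕ → ℝ) (i j : ℕ) : ℝ :=
  (Finset.Icc i j).fold min (l i) l

/-- Neighborhood maximin parameter `m[i,j]`: the maximum of `min(l h, ..., l k)` over
subintervals `[h,k]` of `[1,n]` properly containing `[i,j]`, with value `0` if there
are none (in particular for `[i,j] = [1,n]`). -/
noncomputable def nmaxim (l : ℕ → ℝ) (n i j : ℕ) : ℝ :=
  (((Finset.Icc 1 i) ×ˢ (Finset.Icc j n)).filter (fun p => p ≠ (i, j))).fold max 0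
    (fun p => segMin l p.1 p.2)

/-- `[i,j]` is a full segment (island) of the sequence `l` restricted to `[1,n]`. -/
def IsFullSeg (l : ℕ → ℝ) (n i j : ℕ) : Prop :=
  1 ≤ i ∧ i ≤ j ∧ j ≤ n ∧ nmaxim l n i j < segMin l i j

lemma segMin_le {l : ℕ → ℝ} {i j k : ℕ} (hk : k ∈ Finset.Icc i j) :
    segMin l i j ≤ l k :=
  (Finset.fold_min_le (l k)).mpr (Or.inr ⟨k, hk, le_rfl⟩)

lemma le_segMin {l : ℕ → ℝ} {i j : ℕ} {c : ℝ} (hc : c ≤ l i)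
    (h : ∀ k ∈ Finset.Icc i j, c ≤ l k) : c ≤ segMin l i j :=
  (Finset.le_fold_min c).mpr ⟨hc, h⟩

lemma fold_min_attained (s : Finset ℕ) (b : ℝ) (f : ℕ → ℝ) :
    s.fold min b f = b ∨ ∃ x ∈ s, s.fold min b f = f x := by
  induction s using Finset.induction_on with
  | empty => simp
  | @insert a s ha ih =>
    rw [Finset.fold_insert ha]
    rcases le_total (f a) (s.fold min b f) with hle | hle
    · exact Or.inr ⟨a, Finset.mem_insert_self a s, min_eq_left hle⟩
    · rw [min_eq_right hle]
      rcases ih with h | ⟨x, hx, hx2⟩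
      · exact Or.inl h
      · exact Or.inr ⟨x, Finset.mem_insert_of_mem hx, hx2⟩

lemma segMin_attained {l : ℕ → ℝ} {i j : ℕ} (hij : i ≤ j) :
    ∃ t ∈ Finset.Icc i j, segMin l i j = l t := by
  rcases fold_min_attained (Finset.Icc i j) (l i) l with h | ⟨x, hx, hx2⟩
  · exact ⟨i, Finset.mem_Icc.mpr ⟨le_rfl, hij⟩, h⟩
  · exact ⟨x, hx, hx2⟩

lemma segMin_le_nmaxim {l : ℕ → ℝ} {n i j a b : ℕ} (h1 : 1 ≤ a) (h2 : a ≤ i)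
    (h3 : j ≤ b) (h4 : b ≤ n) (hne : (a, b) ≠ (i, j)) :
    segMin l a b ≤ nmaxim l n i j := by
  refine (Finset.le_fold_max _).mpr (Or.inr ⟨(a, b), ?_, le_rfl⟩)
  simp only [Finset.mem_filter, Finset.mem_product, Finset.mem_Icc]
  exact ⟨⟨⟨h1, h2⟩, ⟨h3, h4⟩⟩, hne⟩

lemma nmaxim_le {l : ℕ → ℝ} {n i j : ℕ} {c : ℝ} (h0 : 0 ≤ c)
    (h : ∀ a b : ℕ, 1 ≤ a → a ≤ i → j ≤ b → b ≤ n → (a, b) ≠ (i, j) →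
      segMin l a b ≤ c) :
    nmaxim l n i j ≤ c := by
  refine (Finset.fold_max_le c).mpr ⟨h0, ?_⟩
  rintro ⟨a, b⟩ hab
  simp only [Finset.mem_filter, Finset.mem_product, Finset.mem_Icc] at hab
  exact h a b hab.1.1.1 hab.1.1.2 hab.1.2.1 hab.1.2.2 hab.2

/-- On a minimal full segment (one containing no other full segment properly),
the sequence is constant. -/
theorem minimal_full_segment_constant (l : ℕ → ℝ) (n i j : ℕ)
    (hnonneg : ∀ k ∈ Finset.Icc 1 n, 0 ≤ l k)
    (h : IsFullSeg l n i j)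
    (hmin : ∀ a b : ℕ, IsFullSeg l n a b → ¬ Finset.Icc a b ⊂ Finset.Icc i j) :
    ∀ k ∈ Finset.Icc i j, l k = l i := by
  obtain ⟨h1i, hij, hjn, hfull⟩ := h
  set μ := segMin l i j with hμ
  obtain ⟨t0, ht0, ht0eq⟩ := segMin_attained (l := l) hij
  have ht0' := Finset.mem_Icc.mp ht0
  have hμ0 : 0 ≤ μ := by
    rw [hμ, ht0eq]
    exact hnonneg t0 (Finset.mem_Icc.mpr ⟨le_trans h1i ht0'.1, le_trans ht0'.2 hjn⟩)
  -- Key claim: all values on [i,j] are ≤ μ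
  have key : ∀ k ∈ Finset.Icc i j, l k ≤ μ := by
    by_contra hcon
    push_neg at hcon
    obtain ⟨k0, hk0mem, hk0⟩ := hcon
    obtain ⟨hik0, hk0j⟩ := Finset.mem_Icc.mp hk0mem
    -- construct a
    obtain ⟨a, hia, hak0, hrunA, hleftA⟩ :
        ∃ a : ℕ, i ≤ a ∧ a ≤ k0 ∧ (∀ t, a ≤ t → t ≤ k0 → μ < l t) ∧
          (i < a → l (a - 1) ≤ μ) := by
      by_cases hA : ((Finset.Icc i k0).filter (fun t => l t ≤ μ)).Nonempty
      · set m := ((Finset.Icc i k0).filter (fun t => l t ≤ μ)).max' hA with hm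
        have hmmem := ((Finset.Icc i k0).filter (fun t => l t ≤ μ)).max'_mem hA
        simp only [Finset.mem_filter, Finset.mem_Icc] at hmmem
        have hmk0 : m < k0 := by
          rcases lt_or_eq_of_le hmmem.1.2 with h | h
          · exact h
          · exact absurd (h ▸ hmmem.2) (not_le.mpr hk0)
        refine ⟨m + 1, le_trans hmmem.1.1 (Nat.le_succ m), hmk0, ?_, fun _ => ?_⟩
        · intro t hat htk0
          by_contra hle
          push_neg at hle
          have : t ≤ m := Finset.le_max' _ t (by
            simp only [Finset.mem_filter, Finset.mem_Icc]
            exact ⟨⟨le_trans hmmem.1.1 (le_trans (Nat.le_succ m) hat), htk0⟩, hle⟩)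
          omega
        · simpa using hmmem.2
      · refine ⟨i, le_rfl, hik0, ?_, fun h => absurd h (lt_irrefl i)⟩
        intro t hat htk0
        by_contra hle
        push_neg at hle
        exact hA ⟨t, by simp only [Finset.mem_filter, Finset.mem_Icc]; exact ⟨⟨hat, htk0⟩, hle⟩⟩
    -- construct b
    obtain ⟨b, hk0b, hbj, hrunB, hrightB⟩ :
        ∃ b : ℕ, k0 ≤ b ∧ b ≤ j ∧ (∀ t, k0 ≤ t → t ≤ b → μ < l t) ∧
          (b < j → l (b + 1) ≤ μ) := by
      by_cases hB : ((Finset.Icc k0 j).filter (fun t => l t ≤ μ)).Nonempty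
      · set m := ((Finset.Icc k0 j).filter (fun t => l t ≤ μ)).min' hB with hm
        have hmmem := ((Finset.Icc k0 j).filter (fun t => l t ≤ μ)).min'_mem hB
        simp only [Finset.mem_filter, Finset.mem_Icc] at hmmem
        have hk0m : k0 < m := by
          rcases lt_or_eq_of_le hmmem.1.1 with h | h
          · exact h
          · exact absurd (h ▸ hmmem.2) (not_le.mpr hk0)
        refine ⟨m - 1, by omega, by omega, ?_, fun _ => ?_⟩
        · intro t hk0t htb
          by_contra hle
          push_neg at hle
          have : m ≤ t := Finset.min'_le _ t (by
            simp only [Finset.mem_filter, Finset.mem_Icc]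
            exact ⟨⟨hk0t, by omega⟩, hle⟩)
          omega
        · have : m - 1 + 1 = m := by omega
          rw [this]; exact hmmem.2
      · refine ⟨j, hk0j, le_rfl, ?_, fun h => absurd h (lt_irrefl j)⟩
        intro t hk0t htj
        by_contra hle
        push_neg at hle
        exact hB ⟨t, by simp only [Finset.mem_filter, Finset.mem_Icc]; exact ⟨⟨hk0t, htj⟩, hle⟩⟩
    have hab : a ≤ b := le_trans hak0 hk0b
    -- run property
    have hrun : ∀ t ∈ Finset.Icc a b, μ < l t := by
      intro t ht
      obtain ⟨hat, htb⟩ := Finset.mem_Icc.mp ht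
      rcases le_total t k0 with h | h
      · exact hrunA t hat h
      · exact hrunB t h htb
    -- segMin on [a,b] is > μ
    have hsegab : μ < segMin l a b := by
      obtain ⟨t, htmem, hteq⟩ := segMin_attained (l := l) hab
      rw [hteq]
      exact hrun t htmem
    -- [a,b] is a full segment
    have hfullab : IsFullSeg l n a b := by
      refine ⟨le_trans h1i hia, hab, le_trans hbj hjn, lt_of_le_of_lt ?_ hsegab⟩
      refine nmaxim_le hμ0 ?_
      intro p q h1p hpa hbq hqn hne
      by_cases hpi : i ≤ p
      · by_cases hqj : q ≤ j
        · -- [p,q] ⊆ [i,j], properly contains [a,b]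
          have hne' : p < a ∨ b < q := by
            by_contra hcc
            push_neg at hcc
            have hp : p = a := le_antisymm hpa hcc.1
            have hq : q = b := le_antisymm hcc.2 hbq
            exact hne (by rw [hp, hq])
          rcases hne' with hpa' | hbq'
          · have hia' : i < a := lt_of_le_of_lt hpi hpa'
            have := hleftA hia'
            refine le_trans (segMin_le (Finset.mem_Icc.mpr ⟨by omega, by omega⟩)) this
          · have hbj' : b < j := lt_of_lt_of_le hbq' hqj
            have := hrightB hbj'
            refine le_trans (segMin_le (Finset.mem_Icc.mpr ⟨by omega, by omega⟩)) this
        · push_neg at hqj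
          -- i ≤ p, j < q : use [i, q]
          have hiq : segMin l i q ≤ nmaxim l n i j :=
            segMin_le_nmaxim h1i le_rfl (le_of_lt hqj) hqn
              (by simp only [ne_eq, Prod.mk.injEq, not_and]; omega)
          have hiqlt : segMin l i q < μ := lt_of_le_of_lt hiq hfull
          obtain ⟨t, htmem, hteq⟩ := segMin_attained (l := l) (i := i) (j := q)
            (by omega)
          obtain ⟨hit, htq⟩ := Finset.mem_Icc.mp htmem
          by_cases hpt : p ≤ t
          · have : segMin l p q ≤ l t := segMin_le (Finset.mem_Icc.mpr ⟨hpt, htq⟩)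
            rw [← hteq] at this
            exact le_of_lt (lt_of_le_of_lt this hiqlt)
          · push_neg at hpt
            have htj : t ≤ j := by omega
            have : μ ≤ l t := segMin_le (Finset.mem_Icc.mpr ⟨hit, htj⟩)
            rw [← hteq] at this
            exact absurd hiqlt (not_lt.mpr this)
      · push_neg at hpi
        by_cases hqj : j ≤ q
        · -- [p,q] properly contains [i,j]
          have : segMin l p q ≤ nmaxim l n i j :=
            segMin_le_nmaxim h1p (le_of_lt hpi) hqj hqn
              (by simp only [ne_eq, Prod.mk.injEq, not_and]; omega)
          exact le_of_lt (lt_of_le_of_lt this (lt_of_lt_of_le hfull (le_of_eq rfl)))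
        · push_neg at hqj
          -- h < i, k < j : use [p, j]
          have hpj : segMin l p j ≤ nmaxim l n i j :=
            segMin_le_nmaxim h1p (le_of_lt hpi) le_rfl hjn
              (by simp only [ne_eq, Prod.mk.injEq, not_and]; omega)
          have hpjlt : segMin l p j < μ := lt_of_le_of_lt hpj hfull
          obtain ⟨t, htmem, hteq⟩ := segMin_attained (l := l) (i := p) (j := j)
            (by omega)
          obtain ⟨hpt, htj⟩ := Finset.mem_Icc.mp htmem
          by_cases htq : t ≤ q
          · have : segMin l p q ≤ l t := segMin_le (Finset.mem_Icc.mpr ⟨hpt, htq⟩)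
            rw [← hteq] at this
            exact le_of_lt (lt_of_le_of_lt this hpjlt)
          · push_neg at htq
            have hit : i ≤ t := by omega
            have : μ ≤ l t := segMin_le (Finset.mem_Icc.mpr ⟨hit, htj⟩)
            rw [← hteq] at this
            exact absurd hpjlt (not_lt.mpr this)
      -- note: remaining case h ≥ i, q > j handled inside hqj branch above
    -- [a,b] is a proper subset of [i,j]
    have hsub : Finset.Icc a b ⊂ Finset.Icc i j := by
      refine (Finset.ssubset_iff_of_subset (Finset.Icc_subset_Icc hia hbj)).mpr ?_
      refine ⟨t0, ht0, ?_⟩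
      intro hmem
      have := hrun t0 hmem
      rw [← ht0eq] at this
      exact lt_irrefl μ this
    exact hmin a b hfullab hsub
  -- conclude
  have hli : l i = μ := by
    have h1 : μ ≤ l i := segMin_le (Finset.mem_Icc.mpr ⟨le_rfl, hij⟩)
    have h2 : l i ≤ μ := key i (Finset.mem_Icc.mpr ⟨le_rfl, hij⟩)
    linarith
  intro k hk
  have h1 : μ ≤ l k := segMin_le hk
  have h2 : l k ≤ μ := key k hk
  linarith
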